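/- The normalization constant for the criss-cross network with μ ∝ 1/q satisfies C = ∫_{S¹} (π/2)(bvM_{k,e1} + bvM_{k,e2})² dw = (I₀(2k) + 1 + 2 I₀(√2 k)) / (4 I₀(k)²), and its isotropic limit is lim_{k→0} C = 1. -/

import Mathlib

open MeasureTheory Real Filter

/-- Modified Bessel function of the first kind of order 0. -/
noncomputable def besselI0 (k : ℝ) : ℝ :=
  (1 / (2 * π)) * ∫ θ in (0:ℝ)..(2 * π), Real.exp (k * Real.cos θ)

/-- Bimodal von Mises density on the unit circle (parametrized by angle `θ`),
with concentration `k` and axis given by the unit vector at angle `α`. -/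
noncomputable def bvM (k α θ : ℝ) : ℝ :=
  (1 / (4 * π * besselI0 k)) *
    (Real.exp (k * Real.cos (θ - α)) + Real.exp (-(k * Real.cos (θ - α))))

/-- The normalization constant for the criss-cross network with `μ ∝ 1/q`. -/
noncomputable def Cnorm (k : ℝ) : ℝ :=
  ∫ θ in (0:ℝ)..(2 * π), (π / 2) * (bvM k 0 θ + bvM k (π / 2) θ)^2

/-! Both bimodal densities are sums of exponentials `exp (v · w)` with `v ∈ {±k e₁, ±k e₂}`, so
the square is the sum over the sixteen pairs `(v, v')` of `exp ((v + v') · w)`. Since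
`v · w = ‖v‖ cos (θ - arg v)` and the integrand is `2π`-periodic, each of these integrates to
`2π I₀ ‖v + v'‖`, and `‖v + v'‖` is `2k` for four pairs, `0` for four and `√2 k` for eight.
The limit then follows from the continuity of `I₀` and `I₀ 0 = 1`. -/

lemma integral_exp_mul_cos_sub (a φ : ℝ) :
    ∫ θ in (0:ℝ)..(2 * π), exp (a * cos (θ - φ)) = 2 * π * besselI0 a := by
  have hper : Function.Periodic (fun θ => exp (a * cos θ)) (2 * π) := fun θ => by
    simp only [cos_add_two_pi]
  rw [intervalIntegral.integral_comp_sub_right (fun θ => exp (a * cos θ)),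
    show 2 * π - φ = -φ + 2 * π by ring, zero_sub, hper.intervalIntegral_add_eq (-φ) 0,
    zero_add, besselI0]
  field_simp

lemma integral_exp_mul_cos_add_mul_sin (p q : ℝ) :
    ∫ θ in (0:ℝ)..(2 * π), exp (p * cos θ + q * sin θ)
      = 2 * π * besselI0 (√(p ^ 2 + q ^ 2)) := by
  set z : ℂ := ⟨p, q⟩
  have hnorm : ‖z‖ = √(p ^ 2 + q ^ 2) := by
    rw [Complex.norm_def, Complex.normSq_mk, sq, sq]
  have hpolar (θ : ℝ) : p * cos θ + q * sin θ = ‖z‖ * cos (θ - z.arg) := by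
    have hre : ‖z‖ * cos z.arg = p := Complex.norm_mul_cos_arg z
    have him : ‖z‖ * sin z.arg = q := Complex.norm_mul_sin_arg z
    rw [cos_sub]
    linear_combination -cos θ * hre - sin θ * him
  simp only [hpolar, integral_exp_mul_cos_sub, hnorm]

lemma besselI0_abs (a : ℝ) : besselI0 |a| = besselI0 a := by
  have h := integral_exp_mul_cos_add_mul_sin a 0
  simp only [zero_mul, add_zero, ne_eq, OfNat.ofNat_ne_zero, not_false_eq_true, zero_pow,
    sqrt_sq_eq_abs] at h
  rw [eq_comm, besselI0, h]
  field_simp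

lemma besselI0_sqrt_sq (a : ℝ) : besselI0 √(a ^ 2) = besselI0 a := by
  rw [sqrt_sq_eq_abs, besselI0_abs]

lemma besselI0_zero : besselI0 0 = 1 := by
  simp only [besselI0, zero_mul, exp_zero, intervalIntegral.integral_const, smul_eq_mul, sub_zero]
  field_simp

lemma besselI0_pos (a : ℝ) : 0 < besselI0 a := by
  have : 0 < ∫ θ in (0:ℝ)..(2 * π), exp (a * cos θ) :=
    intervalIntegral.intervalIntegral_pos_of_pos
      ((by fun_prop : Continuous fun θ => exp (a * cos θ)).intervalIntegrable _ _)
      (fun _ => exp_pos _) (by positivity)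
  rw [besselI0]
  positivity

lemma continuous_besselI0 : Continuous besselI0 :=
  continuous_const.mul <|
    intervalIntegral.continuous_parametric_intervalIntegral_of_continuous' (by fun_prop) _ _

lemma integral_sq_sum_exp_mul_cos_add_mul_sin {ι : Type*} [Fintype ι] (p q : ι → ℝ) :
    ∫ θ in (0:ℝ)..(2 * π), (∑ i, exp (p i * cos θ + q i * sin θ)) ^ 2
      = 2 * π * ∑ i, ∑ j, besselI0 (√((p i + p j) ^ 2 + (q i + q j) ^ 2)) := by
  have hexpand (θ : ℝ) : (∑ i, exp (p i * cos θ + q i * sin θ)) ^ 2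
      = ∑ i, ∑ j, exp ((p i + p j) * cos θ + (q i + q j) * sin θ) := by
    simp only [sq, Finset.sum_mul_sum, ← exp_add]
    refine Finset.sum_congr rfl fun i _ => Finset.sum_congr rfl fun j _ => ?_
    ring_nf
  simp only [hexpand, Finset.mul_sum]
  rw [intervalIntegral.integral_finsetSum fun i _ =>
    (by fun_prop : Continuous _).intervalIntegrable _ _]
  refine Finset.sum_congr rfl fun i _ => ?_
  rw [intervalIntegral.integral_finsetSum fun j _ =>
    (by fun_prop : Continuous _).intervalIntegrable _ _]
  simp only [integral_exp_mul_cos_add_mul_sin]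

lemma bvM_add_bvM_pi_div_two (k θ : ℝ) :
    bvM k 0 θ + bvM k (π / 2) θ
      = (4 * π * besselI0 k)⁻¹ *
          ∑ i, exp (![k, -k, 0, 0] i * cos θ + ![0, 0, k, -k] i * sin θ) := by
  simp only [bvM, sub_zero, cos_sub_pi_div_two, Fin.sum_univ_four, Fin.isValue,
    Matrix.cons_val_zero, Matrix.cons_val_one, Matrix.cons_val, zero_mul, add_zero, zero_add,
    neg_mul]
  ring

lemma Cnorm_eq (k : ℝ) :
    Cnorm k = (besselI0 (2 * k) + 1 + 2 * besselI0 (√2 * k)) / (4 * besselI0 k ^ 2) := by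
  simp only [Cnorm, bvM_add_bvM_pi_div_two, mul_pow, ← mul_assoc]
  rw [intervalIntegral.integral_const_mul, integral_sq_sum_exp_mul_cos_add_mul_sin]
  have hpar : (k + k) ^ 2 = (2 * k) ^ 2 := by ring
  have hanti : (-k + -k) ^ 2 = (2 * k) ^ 2 := by ring
  have horth : k ^ 2 + k ^ 2 = (√2 * k) ^ 2 := by rw [mul_pow, sq_sqrt zero_le_two]; ring
  simp only [Fin.sum_univ_four, Fin.isValue, Matrix.cons_val_zero, Matrix.cons_val_one,
    Matrix.cons_val, add_zero, zero_add, add_neg_cancel, neg_add_cancel, ne_eq,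
    OfNat.ofNat_ne_zero, not_false_eq_true, zero_pow, even_two, Even.neg_pow, sqrt_zero,
    hpar, hanti, horth, besselI0_sqrt_sq, besselI0_zero]
  field_simp
  ring

lemma continuous_Cnorm : Continuous Cnorm := by
  have hI := continuous_besselI0
  simp only [funext Cnorm_eq]
  exact Continuous.div (by fun_prop) (by fun_prop)
    fun k => mul_ne_zero four_ne_zero (pow_ne_zero 2 (besselI0_pos k).ne')

lemma Cnorm_zero : Cnorm 0 = 1 := by
  norm_num [Cnorm_eq, besselI0_zero]

/-- `C(k) = (I₀(2k) + 1 + 2 I₀(√2 k)) / (4 I₀(k)²)` and `lim_{k→0⁺} C(k) = 1`. -/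
theorem crisscross_normalization_constant :
    (∀ k : ℝ, 0 < k →
        Cnorm k = (besselI0 (2 * k) + 1 + 2 * besselI0 (Real.sqrt 2 * k))
          / (4 * (besselI0 k)^2))
      ∧ Tendsto Cnorm (nhdsWithin 0 (Set.Ioi 0)) (nhds 1) :=
  ⟨fun k _ => Cnorm_eq k,
    Cnorm_zero ▸ (continuous_Cnorm.tendsto 0).mono_left nhdsWithin_le_nhds⟩
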